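/- For x > 0 let φ(x) = (1/(2cosh²x))·(1 + sinh(2x)/(2x)). Then φ : (0,∞) → (0,∞) extends continuously to φ(0)=1, is strictly decreasing with limit 0 at ∞ on the relevant range, so that for each K/S₀ ∈ (0,1) the equation φ(x) = K/S₀ has a unique solution x > 0. -/

import Mathlib

/-!
Since `sinh (2x) = 2 sinh x cosh x`, `φ x = (1 + (sinh x / x) cosh x) / (2 cosh² x)`, which
tends to `1` at `0` because `sinh x / x → 1`, and is at most `1 / x` for `x > 0` because
`x < sinh x cosh x < cosh² x`. The same inequality `x < sinh x cosh x` (that is, `2x < sinh 2x`)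
makes the derivative `-(2x² sinh x + cosh x (sinh x cosh x - x)) / (2x² cosh³ x)` negative on
`(0, ∞)`. The intermediate value theorem between the two limits gives a solution of `φ x = r`,
and strict monotonicity makes it unique.
-/

open Real Filter

/-- The function `φ(x) = (1/(2cosh²x))·(1 + sinh(2x)/(2x))` from equation (19). -/
noncomputable def phiSqrt (x : ℝ) : ℝ :=
  1 / (2 * Real.cosh x ^ 2) * (1 + Real.sinh (2 * x) / (2 * x))

open Set Topology

theorem ContinuousOn.Ioo_subset_image_Ioi_of_tendsto {α δ : Type*}
    [ConditionallyCompleteLinearOrder α] [TopologicalSpace α] [OrderTopology α]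
    [DenselyOrdered α] [NoMaxOrder α]
    [LinearOrder δ] [TopologicalSpace δ] [OrderClosedTopology δ]
    {f : α → δ} {a : α} {l m : δ} (hf : ContinuousOn f (Ioi a))
    (hleft : Tendsto f (𝓝[>] a) (𝓝 l)) (htop : Tendsto f atTop (𝓝 m)) :
    Ioo m l ⊆ f '' Ioi a := by
  rintro r ⟨hmr, hrl⟩
  obtain ⟨u, hur, hau⟩ :=
    ((hleft.eventually (eventually_gt_nhds hrl)).and self_mem_nhdsWithin).exists
  obtain ⟨v, hvr, huv⟩ :=
    ((htop.eventually (eventually_lt_nhds hmr)).and (eventually_gt_atTop u)).exists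
  obtain ⟨x, hx, rfl⟩ := intermediate_value_Icc' huv.le
    (hf.mono fun y hy => lt_of_lt_of_le hau hy.1) ⟨hvr.le, hur.le⟩
  exact ⟨x, lt_of_lt_of_le hau hx.1, rfl⟩

theorem Real.tendsto_sinh_div_self : Tendsto (fun x => sinh x / x) (𝓝[≠] 0) (𝓝 1) := by
  have := hasDerivAt_iff_tendsto_slope_zero.mp (hasDerivAt_sinh 0)
  simpa [div_eq_inv_mul] using this

theorem Real.self_lt_sinh_mul_cosh {x : ℝ} (hx : 0 < x) : x < sinh x * cosh x := by
  have h := self_lt_sinh_iff.mpr (mul_pos two_pos hx)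
  rw [sinh_two_mul] at h
  linarith

-- Also at `x = 0`, where both sides are `1 / 2` since division by zero gives `0`.
theorem phiSqrt_eq (x : ℝ) : phiSqrt x = (1 + sinh x / x * cosh x) / (2 * cosh x ^ 2) := by
  rcases eq_or_ne x 0 with rfl | hx
  · simp [phiSqrt]
  · rw [phiSqrt, sinh_two_mul]
    field_simp

theorem hasDerivAt_phiSqrt {x : ℝ} (hx : x ≠ 0) :
    HasDerivAt phiSqrt
      (-(2 * x ^ 2 * sinh x + cosh x * (sinh x * cosh x - x)) / (2 * x ^ 2 * cosh x ^ 3)) x := by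
  have hc : cosh x ≠ 0 := (cosh_pos x).ne'
  have hcosh : HasDerivAt (fun y => 2 * cosh y ^ 2) (2 * (2 * cosh x ^ 1 * sinh x)) x :=
    ((hasDerivAt_cosh x).pow 2).const_mul 2
  have hlin : HasDerivAt (fun y : ℝ => 2 * y) 2 x := by
    simpa using (hasDerivAt_id x).const_mul 2
  have hsinh : HasDerivAt (fun y => sinh (2 * y)) (cosh (2 * x) * 2) x :=
    (hasDerivAt_sinh (2 * x)).comp x hlin
  have h := (hcosh.inv (by positivity)).mul
    ((hsinh.div hlin (mul_ne_zero two_ne_zero hx)).const_add 1)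
  refine (h.congr_of_eventuallyEq (.of_forall fun y => by simp [phiSqrt, one_div])).congr_deriv ?_
  simp only [Pi.inv_apply, Pi.div_apply, cosh_two_mul, sinh_two_mul]
  field_simp
  linear_combination x * cosh x * cosh_sq_sub_sinh_sq x

theorem continuousOn_phiSqrt : ContinuousOn phiSqrt {0}ᶜ := fun _x hx =>
  (hasDerivAt_phiSqrt hx).continuousAt.continuousWithinAt

theorem strictAntiOn_phiSqrt : StrictAntiOn phiSqrt (Ioi 0) := by
  refine strictAntiOn_of_deriv_neg (convex_Ioi 0)
    (continuousOn_phiSqrt.mono fun x hx => ne_of_gt hx) fun x hx => ?_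
  rw [interior_Ioi, mem_Ioi] at hx
  have hsinh : 0 < sinh x := sinh_pos_iff.mpr hx
  have hgap : 0 < sinh x * cosh x - x := sub_pos.mpr (self_lt_sinh_mul_cosh hx)
  rw [(hasDerivAt_phiSqrt (ne_of_gt hx)).deriv]
  exact div_neg_of_neg_of_pos (neg_neg_of_pos (add_pos (by positivity) (mul_pos (cosh_pos x) hgap)))
    (by positivity)

theorem phiSqrt_pos {x : ℝ} (hx : 0 < x) : 0 < phiSqrt x := by
  have := sinh_pos_iff.mpr hx
  rw [phiSqrt_eq]
  positivity

theorem phiSqrt_le_inv {x : ℝ} (hx : 0 < x) : phiSqrt x ≤ x⁻¹ := by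
  have hc := cosh_pos x
  have hsc : sinh x * cosh x < cosh x ^ 2 := by
    rw [sq]; exact mul_lt_mul_of_pos_right (sinh_lt_cosh x) hc
  calc phiSqrt x = (x + sinh x * cosh x) / (2 * x * cosh x ^ 2) := by
        rw [phiSqrt_eq]; field_simp
    _ ≤ 2 * cosh x ^ 2 / (2 * x * cosh x ^ 2) := by
        gcongr; linarith [self_lt_sinh_mul_cosh hx]
    _ = x⁻¹ := by field_simp

theorem tendsto_phiSqrt_atTop : Tendsto phiSqrt atTop (𝓝 0) :=
  tendsto_of_tendsto_of_tendsto_of_le_of_le' tendsto_const_nhds tendsto_inv_atTop_zero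
    ((eventually_gt_atTop 0).mono fun _x hx => (phiSqrt_pos hx).le)
    ((eventually_gt_atTop 0).mono fun _x hx => phiSqrt_le_inv hx)

theorem tendsto_phiSqrt_nhdsNE_zero : Tendsto phiSqrt (𝓝[≠] 0) (𝓝 1) := by
  have hcosh : Tendsto cosh (𝓝[≠] 0) (𝓝 1) := by
    simpa using (continuous_cosh.tendsto 0).mono_left nhdsWithin_le_nhds
  have := ((tendsto_sinh_div_self.mul hcosh).const_add 1).div (hcosh.pow 2 |>.const_mul 2)
    (by norm_num)
  norm_num at this
  exact this.congr fun x => (phiSqrt_eq x).symm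

theorem stmt8 :
    Tendsto phiSqrt (nhdsWithin 0 (Set.Ioi 0)) (nhds 1) ∧
    StrictAntiOn phiSqrt (Set.Ioi 0) ∧
    Tendsto phiSqrt atTop (nhds 0) ∧
    ∀ r : ℝ, 0 < r → r < 1 → ∃! x : ℝ, 0 < x ∧ phiSqrt x = r := by
  have hleft : Tendsto phiSqrt (𝓝[>] 0) (𝓝 1) :=
    tendsto_phiSqrt_nhdsNE_zero.mono_left (nhdsWithin_mono _ fun x hx => ne_of_gt hx)
  refine ⟨hleft, strictAntiOn_phiSqrt, tendsto_phiSqrt_atTop, fun r hr0 hr1 => ?_⟩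
  obtain ⟨x, hx, hxr⟩ :=
    (continuousOn_phiSqrt.mono fun x hx => ne_of_gt hx).Ioo_subset_image_Ioi_of_tendsto
      hleft tendsto_phiSqrt_atTop ⟨hr0, hr1⟩
  exact ⟨x, ⟨hx, hxr⟩, fun y hy => strictAntiOn_phiSqrt.injOn hy.1 hx (hy.2.trans hxr.symm)⟩
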